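/- arXiv:2209.00242 — 5 statements merged into one kernel-verified Lean document; each statement's English description precedes it below -/
import Mathlib

section
/- Let f : ℝ → ℝ be smooth, ε > 0, and let u : [0,∞)×ℝ → ℝ be a smooth solution of u_t + f(u)_x = ε u_xx with u(0,x) = u_0(x). Suppose α : [0,∞)×ℝ → ℝ is a smooth solution of α_t + f'(u) α_x − ε α_xx = 0 with α(0,x) = x, and suppose U : [0,∞)×ℝ → ℝ is a smooth function such that u(t,x) = U(t, α(t,x)) for all (t,x). Then for all (t,x), ∂_t U(t, α(t,x)) = ε α_x(t,x)² ∂_α² U(t, α(t,x)), and U(0, α) = u_0(α) for all α ∈ ℝ. -/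
/-!
Substituting `u = U(t, α)` into the viscous equation, the chain rule gives
`u_t = U_t + α_t U_α`, `u_x = α_x U_α` and `u_xx = α_x² U_αα + α_xx U_α`.
The terms carrying `U_α` are `U_α` times the left-hand side of the equation for `α`,
which vanishes, leaving `U_t = ε α_x² U_αα`.
-/

open Function

section PartialDerivatives

variable {F : ℝ → ℝ → ℝ}

lemma DifferentiableAt.hasDerivAt_uncurry_left {a b : ℝ}
    (hF : DifferentiableAt ℝ (uncurry F) (a, b)) :
    HasDerivAt (fun s => F s b) (fderiv ℝ (uncurry F) (a, b) (1, 0)) a := by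
  exact hF.hasFDerivAt.comp_hasDerivAt a ((hasDerivAt_id a).prodMk (hasDerivAt_const a b))

lemma DifferentiableAt.hasDerivAt_uncurry_right {a b : ℝ}
    (hF : DifferentiableAt ℝ (uncurry F) (a, b)) :
    HasDerivAt (F a) (fderiv ℝ (uncurry F) (a, b) (0, 1)) b := by
  exact hF.hasFDerivAt.comp_hasDerivAt b ((hasDerivAt_const b a).prodMk (hasDerivAt_id b))

lemma hasDerivAt_uncurry_comp {g : ℝ → ℝ} {g' t : ℝ}
    (hF : DifferentiableAt ℝ (uncurry F) (t, g t)) (hg : HasDerivAt g g' t) :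
    HasDerivAt (fun s => F s (g s))
      (deriv (fun s => F s (g t)) t + g' * deriv (F t) (g t)) t := by
  set L := fderiv ℝ (uncurry F) (t, g t)
  have hsplit : L (1, g') = L (1, 0) + g' * L (0, 1) := by
    rw [← smul_eq_mul, ← map_smul, ← map_add]
    simp
  rw [hF.hasDerivAt_uncurry_left.deriv, hF.hasDerivAt_uncurry_right.deriv, ← hsplit]
  exact hF.hasFDerivAt.comp_hasDerivAt t ((hasDerivAt_id t).prodMk hg)

lemma ContDiff.uncurry_apply {n : WithTop ℕ∞} (hF : ContDiff ℝ n (uncurry F)) (a : ℝ) :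
    ContDiff ℝ n (F a) :=
  hF.comp (contDiff_const.prodMk contDiff_id)

end PartialDerivatives

lemma deriv_deriv_comp {G a : ℝ → ℝ} (hG : ContDiff ℝ 2 G) (ha : ContDiff ℝ 2 a) (x : ℝ) :
    deriv (deriv (G ∘ a)) x
      = deriv (deriv G) (a x) * deriv a x ^ 2 + deriv G (a x) * deriv (deriv a) x := by
  have hG₁ : Differentiable ℝ G := hG.differentiable two_ne_zero
  have ha₁ : Differentiable ℝ a := ha.differentiable two_ne_zero
  have hderiv : deriv (G ∘ a) = fun y => deriv G (a y) * deriv a y :=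
    funext fun y => deriv_comp y (hG₁ (a y)) (ha₁ y)
  have hG'a : HasDerivAt (fun y => deriv G (a y)) (deriv (deriv G) (a x) * deriv a x) x :=
    (hG.differentiable_deriv_two (a x)).hasDerivAt.comp x (ha₁ x).hasDerivAt
  rw [hderiv]
  refine (hG'a.mul (ha.differentiable_deriv_two x).hasDerivAt).deriv.trans ?_
  ring

theorem stmt3_general
    (f : ℝ → ℝ)
    (ε : ℝ)
    (u : ℝ → ℝ → ℝ)
    (u₀ : ℝ → ℝ) (hinit : ∀ x, u 0 x = u₀ x)
    (huPDE : ∀ t x,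
      deriv (fun s => u s x) t + deriv f (u t x) * deriv (fun y => u t y) x
        = ε * deriv (deriv (u t)) x)
    (α : ℝ → ℝ → ℝ) (hα : ContDiff ℝ (⊤ : ℕ∞) (Function.uncurry α))
    (hαPDE : ∀ t x,
      deriv (fun s => α s x) t + deriv f (u t x) * deriv (fun y => α t y) x
        - ε * deriv (deriv (α t)) x = 0)
    (hαinit : ∀ x, α 0 x = x)
    (U : ℝ → ℝ → ℝ) (hU : ContDiff ℝ (⊤ : ℕ∞) (Function.uncurry U))
    (hrep : ∀ t x, u t x = U t (α t x)) :
    (∀ t x,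
      deriv (fun s => U s (α t x)) t
        = ε * (deriv (fun y => α t y) x) ^ 2 * deriv (deriv (U t)) (α t x)) ∧
    (∀ β : ℝ, U 0 β = u₀ β) := by
  refine ⟨fun t x => ?_, fun β => by simpa [hαinit, hinit] using (hrep 0 β).symm⟩
  have hU₂ : ContDiff ℝ 2 (U t) := (hU.uncurry_apply t).of_le (WithTop.coe_le_coe.mpr le_top)
  have hα₂ : ContDiff ℝ 2 (α t) := (hα.uncurry_apply t).of_le (WithTop.coe_le_coe.mpr le_top)
  have hslice : u t = U t ∘ α t := funext (hrep t)
  have hα_t : HasDerivAt (fun s => α s x) (deriv (fun s => α s x) t) t :=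
    ((hα.differentiable (by simp)) _).hasDerivAt_uncurry_left.differentiableAt.hasDerivAt
  have hu_t : deriv (fun s => u s x) t = deriv (fun s => U s (α t x)) t
      + deriv (fun s => α s x) t * deriv (U t) (α t x) := by
    simp only [hrep]
    exact (hasDerivAt_uncurry_comp ((hU.differentiable (by simp)) _) hα_t).deriv
  have hu_x : deriv (u t) x = deriv (U t) (α t x) * deriv (α t) x := by
    rw [hslice]
    exact deriv_comp x ((hU₂.differentiable two_ne_zero) _) ((hα₂.differentiable two_ne_zero) x)
  have hu_xx := deriv_deriv_comp hU₂ hα₂ x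
  rw [← hslice] at hu_xx
  have hu := huPDE t x
  rw [hu_t, hu_x, hu_xx] at hu
  linear_combination hu - deriv (U t) (α t x) * hαPDE t x

/-- Change to characteristic coordinates: if `u` solves
`u_t + f(u)_x = ε u_xx` with `u(0,·) = u₀`, `α` solves
`α_t + f'(u) α_x - ε α_xx = 0` with `α(0,x) = x`, and `U` is smooth with
`u(t,x) = U(t, α(t,x))`, then `∂_t U(t,α(t,x)) = ε α_x(t,x)² ∂_α² U(t,α(t,x))`
and `U(0,β) = u₀(β)` for all `β`. -/
theorem stmt3
    (f : ℝ → ℝ) (hf : ContDiff ℝ (⊤ : ℕ∞) f)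
    (ε : ℝ) (hε : 0 < ε)
    (u : ℝ → ℝ → ℝ) (hu : ContDiff ℝ (⊤ : ℕ∞) (Function.uncurry u))
    (u₀ : ℝ → ℝ) (hinit : ∀ x, u 0 x = u₀ x)
    (huPDE : ∀ t x,
      deriv (fun s => u s x) t + deriv f (u t x) * deriv (fun y => u t y) x
        = ε * deriv (deriv (u t)) x)
    (α : ℝ → ℝ → ℝ) (hα : ContDiff ℝ (⊤ : ℕ∞) (Function.uncurry α))
    (hαPDE : ∀ t x,
      deriv (fun s => α s x) t + deriv f (u t x) * deriv (fun y => α t y) x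
        - ε * deriv (deriv (α t)) x = 0)
    (hαinit : ∀ x, α 0 x = x)
    (U : ℝ → ℝ → ℝ) (hU : ContDiff ℝ (⊤ : ℕ∞) (Function.uncurry U))
    (hrep : ∀ t x, u t x = U t (α t x)) :
    (∀ t x,
      deriv (fun s => U s (α t x)) t
        = ε * (deriv (fun y => α t y) x) ^ 2 * deriv (deriv (U t)) (α t x)) ∧
    (∀ β : ℝ, U 0 β = u₀ β) :=
  stmt3_general f ε u u₀ hinit huPDE α hα hαPDE hαinit U hU hrep
end

section
/- Let ε > 0, let b : [0,∞)×𝕋ⁿ → ℝⁿ be smooth on the torus 𝕋ⁿ, let Θ : [0,∞)×𝕋ⁿ → ℝ be a smooth strictly positive solution of Θ_t + div(bΘ) = ε ΔΘ, and let v : [0,∞)×𝕋ⁿ → ℝ be a smooth solution of v_t + div(b v) = ε Δv. Then the ratio w = v/Θ satisfies the identity w_t + b·∇w = ε Θ^{−2} div(Θ² ∇w) at every point (t,x). -/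
/-!
Write `L u = u_t + div (b u) - ε Δu`. For `w = v / Θ` the quotient rule and the product rule
`div (b u) = b · ∇u + u div b` give `Θ² (w_t + b · ∇w) = Θ L v - v L Θ + ε (Θ Δv - v ΔΘ)`, the
`div b` terms cancelling. On the other side `Θ² ∂ᵢw = Θ ∂ᵢv - v ∂ᵢΘ`, whose `∂ᵢ`-derivative is
`Θ ∂ᵢ²v - v ∂ᵢ²Θ`. Hence both sides agree once `L v = L Θ = 0`.
-/

/-- Partial derivative in the `i`-th coordinate direction. -/
noncomputable def pderiv₉ {n : ℕ} (i : Fin n) (g : (Fin n → ℝ) → ℝ) (x : Fin n → ℝ) : ℝ :=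
  fderiv ℝ g x (Pi.single i 1)

/-- A function on `ℝⁿ` representing a function on the torus `𝕋ⁿ = [0,1]ⁿ`:
it is periodic with respect to the lattice `ℤⁿ`. -/
def TorusFun₉ {n : ℕ} (g : (Fin n → ℝ) → ℝ) : Prop :=
  ∀ (x : Fin n → ℝ) (k : Fin n → ℤ), g (x + fun i => (k i : ℝ)) = g x

section PartialDerivative

variable {n : ℕ} (i : Fin n) {f g : (Fin n → ℝ) → ℝ} {x : Fin n → ℝ}

lemma pderiv₉_mul (hf : DifferentiableAt ℝ f x) (hg : DifferentiableAt ℝ g x) :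
    pderiv₉ i (fun y => f y * g y) x = f x * pderiv₉ i g x + g x * pderiv₉ i f x := by
  simp [pderiv₉, fderiv_fun_mul hf hg]

lemma pderiv₉_sub (hf : DifferentiableAt ℝ f x) (hg : DifferentiableAt ℝ g x) :
    pderiv₉ i (fun y => f y - g y) x = pderiv₉ i f x - pderiv₉ i g x := by
  simp [pderiv₉, fderiv_fun_sub hf hg]

lemma pderiv₉_div (hf : DifferentiableAt ℝ f x) (hg : DifferentiableAt ℝ g x) (hx : f x ≠ 0) :
    pderiv₉ i (fun y => g y / f y) x
      = (f x * pderiv₉ i g x - g x * pderiv₉ i f x) / f x ^ 2 := by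
  have hinv : fderiv ℝ (fun y => (f y)⁻¹) x = fderiv ℝ (·⁻¹) (f x) ∘L fderiv ℝ f x :=
    fderiv_comp (g := fun u : ℝ => u⁻¹) x (differentiableAt_inv hx) hf
  simp only [div_eq_mul_inv, pderiv₉]
  rw [fderiv_fun_mul (c := g) (d := fun y => (f y)⁻¹) hg (hf.fun_inv hx), hinv, fderiv_inv]
  simp only [add_apply, smul_apply,
    ContinuousLinearMap.comp_apply, ContinuousLinearMap.toSpanSingleton_apply, smul_eq_mul]
  field_simp
  ring

lemma ContDiff.differentiable_pderiv₉ (hf : ContDiff ℝ 2 f) :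
    Differentiable ℝ (pderiv₉ i f) :=
  ((hf.fderiv_right (m := 1) (by norm_num)).clm_apply contDiff_const).differentiable one_ne_zero

lemma sq_mul_pderiv₉_div (hf : Differentiable ℝ f) (hg : Differentiable ℝ g)
    (hf0 : ∀ y, f y ≠ 0) :
    (fun y => f y ^ 2 * pderiv₉ i (fun z => g z / f z) y)
      = fun y => f y * pderiv₉ i g y - g y * pderiv₉ i f y := by
  funext y
  rw [pderiv₉_div i (hf y) (hg y) (hf0 y)]
  field_simp [hf0 y]

/-- The cross terms `∂ᵢf ∂ᵢg` cancel. -/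
lemma pderiv₉_sq_mul_pderiv₉_div (hf : ContDiff ℝ 2 f) (hg : ContDiff ℝ 2 g)
    (hf0 : ∀ y, f y ≠ 0) :
    pderiv₉ i (fun y => f y ^ 2 * pderiv₉ i (fun z => g z / f z) y) x
      = f x * pderiv₉ i (pderiv₉ i g) x - g x * pderiv₉ i (pderiv₉ i f) x := by
  have hf1 := hf.differentiable two_ne_zero
  have hg1 := hg.differentiable two_ne_zero
  have hf2 := hf.differentiable_pderiv₉ i
  have hg2 := hg.differentiable_pderiv₉ i
  rw [sq_mul_pderiv₉_div i hf1 hg1 hf0,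
    pderiv₉_sub i (f := fun y => f y * pderiv₉ i g y) (g := fun y => g y * pderiv₉ i f y)
      ((hf1 x).mul (hg2 x)) ((hg1 x).mul (hf2 x)),
    pderiv₉_mul i (hf1 x) (hg2 x), pderiv₉_mul i (hg1 x) (hf2 x)]
  ring

lemma sum_mul_pderiv₉_div (a : Fin n → ℝ) (hf : DifferentiableAt ℝ f x)
    (hg : DifferentiableAt ℝ g x) (hx : f x ≠ 0) :
    ∑ i, a i * pderiv₉ i (fun y => g y / f y) x
      = (f x * ∑ i, a i * pderiv₉ i g x - g x * ∑ i, a i * pderiv₉ i f x) / f x ^ 2 := by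
  simp only [pderiv₉_div _ hf hg hx, Finset.mul_sum, ← Finset.sum_sub_distrib, Finset.sum_div]
  exact Finset.sum_congr rfl fun i _ => by ring

lemma sum_pderiv₉_mul (b : (Fin n → ℝ) → Fin n → ℝ)
    (hb : ∀ i, DifferentiableAt ℝ (fun y => b y i) x) (hf : DifferentiableAt ℝ f x) :
    ∑ i, pderiv₉ i (fun y => b y i * f y) x
      = ∑ i, b x i * pderiv₉ i f x + f x * ∑ i, pderiv₉ i (fun y => b y i) x := by
  simp only [pderiv₉_mul _ (hb _) hf, Finset.sum_add_distrib, Finset.mul_sum]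

end PartialDerivative

theorem stmt9_general (n : ℕ)
    (ε : ℝ)
    (b : ℝ → (Fin n → ℝ) → (Fin n → ℝ))
    (hb : ContDiff ℝ (⊤ : ℕ∞) (Function.uncurry b))
    (Θ v : ℝ → (Fin n → ℝ) → ℝ)
    (hΘ : ContDiff ℝ (⊤ : ℕ∞) (Function.uncurry Θ))
    (hΘpos : ∀ t x, 0 ≤ t → 0 < Θ t x)
    (hΘPDE : ∀ t x, 0 ≤ t →
      deriv (fun s => Θ s x) t + ∑ i, pderiv₉ i (fun y => b t y i * Θ t y) x
        = ε * ∑ i, pderiv₉ i (pderiv₉ i (Θ t)) x)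
    (hv : ContDiff ℝ (⊤ : ℕ∞) (Function.uncurry v))
    (hvPDE : ∀ t x, 0 ≤ t →
      deriv (fun s => v s x) t + ∑ i, pderiv₉ i (fun y => b t y i * v t y) x
        = ε * ∑ i, pderiv₉ i (pderiv₉ i (v t)) x) :
    ∀ t x, 0 ≤ t →
      deriv (fun s => v s x / Θ s x) t
          + ∑ i, b t x i * pderiv₉ i (fun y => v t y / Θ t y) x
        = ε * ((Θ t x) ^ 2)⁻¹ *
            ∑ i, pderiv₉ i
              (fun y => (Θ t y) ^ 2 * pderiv₉ i (fun z => v t z / Θ t z) y) x := by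
  intro t x ht
  have hΘt : ContDiff ℝ 2 (Θ t) :=
    (hΘ.comp (contDiff_const.prodMk contDiff_id)).of_le (WithTop.coe_le_coe.mpr le_top)
  have hvt : ContDiff ℝ 2 (v t) :=
    (hv.comp (contDiff_const.prodMk contDiff_id)).of_le (WithTop.coe_le_coe.mpr le_top)
  have hbt : ∀ i, DifferentiableAt ℝ (fun y => b t y i) x := fun i =>
    (contDiff_pi.mp (hb.comp (contDiff_const.prodMk contDiff_id)) i).differentiable
      (by simp) x
  have hΘs : DifferentiableAt ℝ (fun s => Θ s x) t :=
    (hΘ.comp (contDiff_id.prodMk contDiff_const)).differentiable (by simp) t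
  have hvs : DifferentiableAt ℝ (fun s => v s x) t :=
    (hv.comp (contDiff_id.prodMk contDiff_const)).differentiable (by simp) t
  have hΘ0 : ∀ y, Θ t y ≠ 0 := fun y => (hΘpos t y ht).ne'
  have hΘx := hΘt.differentiable two_ne_zero x
  have hvx := hvt.differentiable two_ne_zero x
  have hΘeq := hΘPDE t x ht
  have hveq := hvPDE t x ht
  rw [sum_pderiv₉_mul _ hbt hΘx] at hΘeq
  rw [sum_pderiv₉_mul _ hbt hvx] at hveq
  rw [deriv_fun_div hvs hΘs (hΘ0 x), sum_mul_pderiv₉_div _ hΘx hvx (hΘ0 x),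
    Finset.sum_congr rfl fun i _ => pderiv₉_sq_mul_pderiv₉_div i hΘt hvt hΘ0,
    Finset.sum_sub_distrib, ← Finset.mul_sum, ← Finset.mul_sum]
  field_simp [hΘ0 x]
  linear_combination Θ t x * hveq - v t x * hΘeq

/-- If `Θ > 0` solves `Θ_t + div(bΘ) = ε ΔΘ` and `v` solves
`v_t + div(bv) = ε Δv` on the torus, then `w = v/Θ` satisfies
`w_t + b·∇w = ε Θ⁻² div(Θ² ∇w)` at every point. -/
theorem stmt9 (n : ℕ) (hn : 0 < n)
    (ε : ℝ) (hε : 0 < ε)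
    (b : ℝ → (Fin n → ℝ) → (Fin n → ℝ))
    (hb : ContDiff ℝ (⊤ : ℕ∞) (Function.uncurry b))
    (hbper : ∀ t i, TorusFun₉ (fun x => b t x i))
    (Θ v : ℝ → (Fin n → ℝ) → ℝ)
    (hΘ : ContDiff ℝ (⊤ : ℕ∞) (Function.uncurry Θ))
    (hΘper : ∀ t, TorusFun₉ (Θ t))
    (hΘpos : ∀ t x, 0 ≤ t → 0 < Θ t x)
    (hΘPDE : ∀ t x, 0 ≤ t →
      deriv (fun s => Θ s x) t + ∑ i, pderiv₉ i (fun y => b t y i * Θ t y) x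
        = ε * ∑ i, pderiv₉ i (pderiv₉ i (Θ t)) x)
    (hv : ContDiff ℝ (⊤ : ℕ∞) (Function.uncurry v))
    (hvper : ∀ t, TorusFun₉ (v t))
    (hvPDE : ∀ t x, 0 ≤ t →
      deriv (fun s => v s x) t + ∑ i, pderiv₉ i (fun y => b t y i * v t y) x
        = ε * ∑ i, pderiv₉ i (pderiv₉ i (v t)) x) :
    ∀ t x, 0 ≤ t →
      deriv (fun s => v s x / Θ s x) t
          + ∑ i, b t x i * pderiv₉ i (fun y => v t y / Θ t y) x
        = ε * ((Θ t x) ^ 2)⁻¹ *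
            ∑ i, pderiv₉ i
              (fun y => (Θ t y) ^ 2 * pderiv₉ i (fun z => v t z / Θ t z) y) x :=
  stmt9_general n ε b hb Θ v hΘ hΘpos hΘPDE hv hvPDE
end

section
/- Let ε > 0, 1 < p < ∞, let b : [0,∞)×𝕋ⁿ → ℝⁿ be smooth on the torus 𝕋ⁿ, let Θ be a smooth strictly positive solution of Θ_t + div(bΘ) = ε ΔΘ, and let v be a smooth solution of v_t + div(bv) = ε Δv. Then at every point (t,x) where v(t,x) ≠ 0, the following identity holds: ∂_t(|v|^p/Θ^{p−1}) + div(b |v|^p/Θ^{p−1}) + ε (4(p−1)/p) Θ |∇(|v|^{p/2}/Θ^{p/2})|² = ε Δ(|v|^p/Θ^{p−1}). -/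
/-!
Where `v ≠ 0` and `Θ > 0` one has `|v|^p/Θ^{p-1} = exp (p log v - (p-1) log Θ)`, so every
derivative of `Φ = |v|^p/Θ^{p-1}` is `Φ` times an explicit expression in the logarithmic
derivatives of `v` and `Θ`; second partials are computed along coordinate lines, where this is
one-variable calculus. After substituting the equations for `v_t` and `Θ_t`, the transport terms
cancel because `Φ` is homogeneous of degree one in `(v, Θ)`, and the diffusion terms leave
`ε p (p-1) Φ |∇v/v - ∇Θ/Θ|²`, which is `ε (4(p-1)/p) Θ |∇(|v|^{p/2}/Θ^{p/2})|²`.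
-/

open Real Filter Topology

/-- Partial derivative in the `i`-th coordinate direction. -/
noncomputable def pderiv₁₁ {n : ℕ} (i : Fin n) (g : (Fin n → ℝ) → ℝ) (x : Fin n → ℝ) : ℝ :=
  fderiv ℝ g x (Pi.single i 1)

/-- A function on `ℝⁿ` representing a function on the torus `𝕋ⁿ = [0,1]ⁿ`:
it is periodic with respect to the lattice `ℤⁿ`. -/
def TorusFun₁₁ {n : ℕ} (g : (Fin n → ℝ) → ℝ) : Prop :=
  ∀ (x : Fin n → ℝ) (k : Fin n → ℤ), g (x + fun i => (k i : ℝ)) = g x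

theorem abs_rpow_div_rpow_eq_exp {a θ : ℝ} (ha : a ≠ 0) (hθ : 0 < θ) (p q : ℝ) :
    |a| ^ p / θ ^ q = exp (p * log a - q * log θ) := by
  rw [rpow_def_of_pos (abs_pos.2 ha), rpow_def_of_pos hθ, log_abs, ← exp_sub]
  ring_nf

theorem mul_sq_abs_rpow_half_div_rpow_half {a θ : ℝ} (hθ : 0 < θ) (p : ℝ) :
    θ * (|a| ^ (p / 2) / θ ^ (p / 2)) ^ 2 = |a| ^ p / θ ^ (p - 1) := by
  rw [div_pow, ← rpow_mul_natCast (abs_nonneg a), ← rpow_mul_natCast hθ.le, rpow_sub hθ, rpow_one]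
  push_cast
  field_simp

theorem HasDerivAt.abs_rpow_div_rpow {V T : ℝ → ℝ} {V' T' s : ℝ} (hV : HasDerivAt V V' s)
    (hT : HasDerivAt T T' s) (hV0 : V s ≠ 0) (hT0 : 0 < T s) (p q : ℝ) :
    HasDerivAt (fun r => |V r| ^ p / T r ^ q)
      (|V s| ^ p / T s ^ q * (p * V' / V s - q * T' / T s)) s := by
  have hlog : HasDerivAt (fun r => p * Real.log (V r) - q * Real.log (T r))
      (p * (V' / V s) - q * (T' / T s)) s :=
    ((hV.log hV0).const_mul p).sub ((hT.log hT0.ne').const_mul q)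
  have hpos : ∀ᶠ r in 𝓝 s, V r ≠ 0 ∧ 0 < T r :=
    (hV.continuousAt.eventually_ne hV0).and (hT.continuousAt.eventually (lt_mem_nhds hT0))
  refine (hlog.exp.congr_of_eventuallyEq
    (hpos.mono fun r hr => abs_rpow_div_rpow_eq_exp hr.1 hr.2 p q)).congr_deriv ?_
  rw [abs_rpow_div_rpow_eq_exp hV0 hT0]
  ring

theorem deriv_deriv_abs_rpow_div_rpow {V T : ℝ → ℝ} {s : ℝ} (hV : ContDiffAt ℝ 2 V s)
    (hT : ContDiffAt ℝ 2 T s) (hV0 : V s ≠ 0) (hT0 : 0 < T s) (p q : ℝ) :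
    deriv (deriv fun r => |V r| ^ p / T r ^ q) s =
      |V s| ^ p / T s ^ q * ((p * deriv V s / V s - q * deriv T s / T s) ^ 2
        + p * (deriv (deriv V) s / V s - (deriv V s / V s) ^ 2)
        - q * (deriv (deriv T) s / T s - (deriv T s / T s) ^ 2)) := by
  have hnear : ∀ᶠ r in 𝓝 s,
      DifferentiableAt ℝ V r ∧ DifferentiableAt ℝ T r ∧ V r ≠ 0 ∧ 0 < T r := by
    filter_upwards [hV.eventually (by simp), hT.eventually (by simp),
      hV.continuousAt.eventually_ne hV0, hT.continuousAt.eventually (lt_mem_nhds hT0)]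
      with r hVr hTr hV0r hT0r
    exact ⟨hVr.differentiableAt (by simp), hTr.differentiableAt (by simp), hV0r, hT0r⟩
  have hderiv : (deriv fun r => |V r| ^ p / T r ^ q) =ᶠ[𝓝 s]
      fun r => |V r| ^ p / T r ^ q * (p * deriv V r / V r - q * deriv T r / T r) :=
    hnear.mono fun r ⟨hVr, hTr, hV0r, hT0r⟩ =>
      (hVr.hasDerivAt.abs_rpow_div_rpow hTr.hasDerivAt hV0r hT0r p q).deriv
  have hVd := (hV.differentiableAt (by simp)).hasDerivAt
  have hTd := (hT.differentiableAt (by simp)).hasDerivAt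
  have hVdd : HasDerivAt (deriv V) (deriv (deriv V) s) s :=
    ((hV.derivWithin (m := 1) (by norm_num)).differentiableAt (by simp)).hasDerivAt
  have hTdd : HasDerivAt (deriv T) (deriv (deriv T) s) s :=
    ((hT.derivWithin (m := 1) (by norm_num)).differentiableAt (by simp)).hasDerivAt
  have hprod : HasDerivAt
      (fun r => |V r| ^ p / T r ^ q * (p * deriv V r / V r - q * deriv T r / T r)) _ s :=
    (hVd.abs_rpow_div_rpow hTd hV0 hT0 p q).mul
      (((hVdd.const_mul p).div hVd hV0).sub ((hTdd.const_mul q).div hTd hT0.ne'))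
  rw [hderiv.deriv_eq, hprod.deriv]
  field_simp
  ring

section
variable {n : ℕ} (i : Fin n) {g : (Fin n → ℝ) → ℝ} {x : Fin n → ℝ}

theorem DifferentiableAt.hasDerivAt_comp_line {s : ℝ}
    (hg : DifferentiableAt ℝ g (x + s • Pi.single i 1)) :
    HasDerivAt (fun r => g (x + r • Pi.single i 1)) (pderiv₁₁ i g (x + s • Pi.single i 1)) s := by
  have hline : HasDerivAt (fun r : ℝ => x + r • (Pi.single i 1 : Fin n → ℝ)) (Pi.single i 1) s := by
    simpa using ((hasDerivAt_id s).smul_const (Pi.single i (1 : ℝ))).const_add x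
  exact hg.hasFDerivAt.comp_hasDerivAt s hline

theorem DifferentiableAt.hasDerivAt_comp_line_zero (hg : DifferentiableAt ℝ g x) :
    HasDerivAt (fun r : ℝ => g (x + r • Pi.single i 1)) (pderiv₁₁ i g x) 0 := by
  simpa using (show DifferentiableAt ℝ g (x + (0 : ℝ) • Pi.single i 1) by simpa using hg)
    |>.hasDerivAt_comp_line i

theorem pderiv₁₁_eq_deriv_comp_line (hg : DifferentiableAt ℝ g x) :
    pderiv₁₁ i g x = deriv (fun r : ℝ => g (x + r • Pi.single i 1)) 0 :=
  (hg.hasDerivAt_comp_line_zero i).deriv.symm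

theorem pderiv₁₁_pderiv₁₁_eq_deriv_deriv_comp_line (hg : ContDiffAt ℝ 2 g x) :
    pderiv₁₁ i (pderiv₁₁ i g) x = deriv (deriv fun r : ℝ => g (x + r • Pi.single i 1)) 0 := by
  have hpderiv : DifferentiableAt ℝ (pderiv₁₁ i g) x :=
    ((hg.fderiv_right (m := 1) (by norm_num)).clm_apply contDiffAt_const).differentiableAt
      (by simp)
  have hline : Tendsto (fun r : ℝ => x + r • (Pi.single i 1 : Fin n → ℝ)) (𝓝 0) (𝓝 x) :=
    (by fun_prop : Continuous fun r : ℝ => x + r • (Pi.single i 1 : Fin n → ℝ)).tendsto' 0 x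
      (by simp)
  have hnear : ∀ᶠ r in 𝓝 (0 : ℝ), DifferentiableAt ℝ g (x + r • Pi.single i 1) :=
    hline.eventually ((hg.eventually (by simp)).mono fun y hy => hy.differentiableAt (by simp))
  rw [pderiv₁₁_eq_deriv_comp_line i hpderiv]
  exact EventuallyEq.deriv_eq (hnear.mono fun r hr => (hr.hasDerivAt_comp_line i).deriv.symm)

theorem pderiv₁₁_mul {f : (Fin n → ℝ) → ℝ} (hf : DifferentiableAt ℝ f x)
    (hg : DifferentiableAt ℝ g x) :
    pderiv₁₁ i (fun y => f y * g y) x = f x * pderiv₁₁ i g x + g x * pderiv₁₁ i f x := by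
  simp [pderiv₁₁, fderiv_fun_mul hf hg]

variable {V T : (Fin n → ℝ) → ℝ}

theorem DifferentiableAt.abs_rpow_div_rpow (hV : DifferentiableAt ℝ V x)
    (hT : DifferentiableAt ℝ T x) (hV0 : V x ≠ 0) (hT0 : 0 < T x) (p q : ℝ) :
    DifferentiableAt ℝ (fun y => |V y| ^ p / T y ^ q) x := by
  simp only [div_eq_mul_inv]
  exact ((hV.abs hV0).rpow_const (Or.inl (abs_pos.2 hV0).ne')).mul
    ((hT.rpow_const (Or.inl hT0.ne')).fun_inv (rpow_pos_of_pos hT0 q).ne')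

theorem pderiv₁₁_abs_rpow_div_rpow (hV : DifferentiableAt ℝ V x) (hT : DifferentiableAt ℝ T x)
    (hV0 : V x ≠ 0) (hT0 : 0 < T x) (p q : ℝ) :
    pderiv₁₁ i (fun y => |V y| ^ p / T y ^ q) x =
      |V x| ^ p / T x ^ q * (p * pderiv₁₁ i V x / V x - q * pderiv₁₁ i T x / T x) := by
  rw [pderiv₁₁_eq_deriv_comp_line i (hV.abs_rpow_div_rpow hT hV0 hT0 p q)]
  exact ((hV.hasDerivAt_comp_line_zero i).abs_rpow_div_rpow (hT.hasDerivAt_comp_line_zero i)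
    (by simpa using hV0) (by simpa using hT0) p q).deriv.trans (by simp)

theorem pderiv₁₁_pderiv₁₁_abs_rpow_div_rpow (hV : ContDiffAt ℝ 2 V x) (hT : ContDiffAt ℝ 2 T x)
    (hV0 : V x ≠ 0) (hT0 : 0 < T x) (p q : ℝ) :
    pderiv₁₁ i (pderiv₁₁ i fun y => |V y| ^ p / T y ^ q) x =
      |V x| ^ p / T x ^ q * ((p * pderiv₁₁ i V x / V x - q * pderiv₁₁ i T x / T x) ^ 2
        + p * (pderiv₁₁ i (pderiv₁₁ i V) x / V x - (pderiv₁₁ i V x / V x) ^ 2)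
        - q * (pderiv₁₁ i (pderiv₁₁ i T) x / T x - (pderiv₁₁ i T x / T x) ^ 2)) := by
  have hf : ContDiffAt ℝ 2 (fun y => |V y| ^ p / T y ^ q) x :=
    ((hV.abs hV0).rpow_const_of_ne (abs_pos.2 hV0).ne').div
      (hT.rpow_const_of_ne hT0.ne') (rpow_pos_of_pos hT0 q).ne'
  have hline : ContDiffAt ℝ 2 (fun r : ℝ => x + r • (Pi.single i 1 : Fin n → ℝ)) 0 := by
    fun_prop
  have hVl : ContDiffAt ℝ 2 (fun r : ℝ => V (x + r • Pi.single i 1)) 0 :=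
    ContDiffAt.comp 0 (by simpa using hV) hline
  have hTl : ContDiffAt ℝ 2 (fun r : ℝ => T (x + r • Pi.single i 1)) 0 :=
    ContDiffAt.comp 0 (by simpa using hT) hline
  rw [pderiv₁₁_pderiv₁₁_eq_deriv_deriv_comp_line i hf,
    deriv_deriv_abs_rpow_div_rpow hVl hTl (by simpa using hV0) (by simpa using hT0),
    pderiv₁₁_eq_deriv_comp_line i (hV.differentiableAt (by simp)),
    pderiv₁₁_eq_deriv_comp_line i (hT.differentiableAt (by simp)),
    pderiv₁₁_pderiv₁₁_eq_deriv_deriv_comp_line i hV,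
    pderiv₁₁_pderiv₁₁_eq_deriv_deriv_comp_line i hT]
  simp

end

-- Also at `p = 0`, where both sides vanish because `4 * (p - 1) / 0 = 0`.
theorem four_mul_sub_one_div_mul_half_sq (p : ℝ) :
    4 * (p - 1) / p * (p / 2) ^ 2 = p * (p - 1) := by
  rcases eq_or_ne p 0 with rfl | hp
  · simp
  · field_simp
    ring

/- `V, T` stand for `v, Θ` at the point, `Vd, Td, Vdd, Tdd` for their first and second partials,
`B, Bd` for `bᵢ` and `∂ᵢbᵢ`, `Vt, Tt` for the time derivatives, `G` for `|v|^{p/2}/Θ^{p/2}`. -/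
theorem entropy_balance {ι : Type*} [Fintype ι] {ε p V T Vt Tt G Φ : ℝ}
    {B Bd Vd Td Vdd Tdd : ι → ℝ} (hV : V ≠ 0) (hT : T ≠ 0)
    (hΦ : T * G ^ 2 = Φ) (hVt : Vt + ∑ i, (B i * Vd i + V * Bd i) = ε * ∑ i, Vdd i)
    (hTt : Tt + ∑ i, (B i * Td i + T * Bd i) = ε * ∑ i, Tdd i) :
    Φ * (p * Vt / V - (p - 1) * Tt / T)
      + ∑ i, (B i * (Φ * (p * Vd i / V - (p - 1) * Td i / T)) + Φ * Bd i)
      + ε * (4 * (p - 1) / p) * T * ∑ i, (G * (p / 2 * Vd i / V - p / 2 * Td i / T)) ^ 2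
    = ε * ∑ i, Φ * ((p * Vd i / V - (p - 1) * Td i / T) ^ 2
        + p * (Vdd i / V - (Vd i / V) ^ 2) - (p - 1) * (Tdd i / T - (Td i / T) ^ 2)) := by
  subst hΦ
  obtain rfl := eq_sub_of_add_eq hVt
  obtain rfl := eq_sub_of_add_eq hTt
  have hcoef := four_mul_sub_one_div_mul_half_sq p
  simp only [Finset.mul_sum, ← Finset.sum_sub_distrib, Finset.sum_div, ← Finset.sum_add_distrib]
  refine Finset.sum_congr rfl fun i _ => ?_
  linear_combination (ε * T * G ^ 2 * (Vd i / V - Td i / T) ^ 2) * hcoef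
    - T * G ^ 2 * p * Bd i * mul_inv_cancel₀ hV + T * G ^ 2 * (p - 1) * Bd i * mul_inv_cancel₀ hT

theorem stmt11_general (n : ℕ) (ε : ℝ) (p : ℝ)
    (b : ℝ → (Fin n → ℝ) → (Fin n → ℝ))
    (hb : ContDiff ℝ (⊤ : ℕ∞) (Function.uncurry b))
    (Θ v : ℝ → (Fin n → ℝ) → ℝ)
    (hΘ : ContDiff ℝ (⊤ : ℕ∞) (Function.uncurry Θ))
    (hΘpos : ∀ t x, 0 ≤ t → 0 < Θ t x)
    (hΘPDE : ∀ t x, 0 ≤ t →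
      deriv (fun s => Θ s x) t + ∑ i, pderiv₁₁ i (fun y => b t y i * Θ t y) x
        = ε * ∑ i, pderiv₁₁ i (pderiv₁₁ i (Θ t)) x)
    (hv : ContDiff ℝ (⊤ : ℕ∞) (Function.uncurry v))
    (hvPDE : ∀ t x, 0 ≤ t →
      deriv (fun s => v s x) t + ∑ i, pderiv₁₁ i (fun y => b t y i * v t y) x
        = ε * ∑ i, pderiv₁₁ i (pderiv₁₁ i (v t)) x) :
    ∀ t x, 0 ≤ t → v t x ≠ 0 →
      deriv (fun s => |v s x| ^ p / Θ s x ^ (p - 1)) t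
          + ∑ i, pderiv₁₁ i (fun y => b t y i * (|v t y| ^ p / Θ t y ^ (p - 1))) x
          + ε * (4 * (p - 1) / p) * Θ t x *
              ∑ i, (pderiv₁₁ i (fun y => |v t y| ^ (p / 2) / Θ t y ^ (p / 2)) x) ^ 2
        = ε * ∑ i, pderiv₁₁ i (pderiv₁₁ i (fun y => |v t y| ^ p / Θ t y ^ (p - 1))) x := by
  intro t x ht hvx
  have hΘx := hΘpos t x ht
  have hvt : ContDiff ℝ 2 (v t) :=
    (hv.comp (contDiff_prodMk_right t)).of_le (WithTop.coe_le_coe.2 le_top)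
  have hΘt : ContDiff ℝ 2 (Θ t) :=
    (hΘ.comp (contDiff_prodMk_right t)).of_le (WithTop.coe_le_coe.2 le_top)
  have hbt : ∀ i, Differentiable ℝ fun y => b t y i := fun i =>
    (contDiff_pi.mp (hb.comp (contDiff_prodMk_right t)) i).differentiable (by simp)
  have hv_time : Differentiable ℝ fun s => v s x :=
    (hv.comp (contDiff_prodMk_left x)).differentiable (by simp)
  have hΘ_time : Differentiable ℝ fun s => Θ s x :=
    (hΘ.comp (contDiff_prodMk_left x)).differentiable (by simp)
  have hvd := hvt.differentiable (by simp) x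
  have hΘd := hΘt.differentiable (by simp) x
  have hvPDEx := hvPDE t x ht
  have hΘPDEx := hΘPDE t x ht
  simp only [pderiv₁₁_mul _ (hbt _ x) hvd, pderiv₁₁_mul _ (hbt _ x) hΘd] at hvPDEx hΘPDEx
  rw [((hv_time t).hasDerivAt.abs_rpow_div_rpow (hΘ_time t).hasDerivAt hvx hΘx p (p - 1)).deriv]
  simp only [pderiv₁₁_mul _ (hbt _ x) (hvd.abs_rpow_div_rpow hΘd hvx hΘx p (p - 1)),
    pderiv₁₁_abs_rpow_div_rpow _ hvd hΘd hvx hΘx,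
    pderiv₁₁_pderiv₁₁_abs_rpow_div_rpow _ hvt.contDiffAt hΘt.contDiffAt hvx hΘx]
  exact entropy_balance hvx hΘx.ne' (mul_sq_abs_rpow_half_div_rpow_half hΘx p) hvPDEx hΘPDEx

/-- The pointwise entropy identity for `|v|^p/Θ^{p-1}`:
if `Θ > 0` solves `Θ_t + div(bΘ) = ε ΔΘ` and `v` solves `v_t + div(bv) = ε Δv`,
then at every point where `v ≠ 0`,
`∂_t(|v|^p/Θ^{p-1}) + div(b |v|^p/Θ^{p-1})
  + ε (4(p-1)/p) Θ |∇(|v|^{p/2}/Θ^{p/2})|² = ε Δ(|v|^p/Θ^{p-1})`. -/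
theorem stmt11 (n : ℕ) (hn : 0 < n)
    (ε : ℝ) (hε : 0 < ε)
    (p : ℝ) (hp : 1 < p)
    (b : ℝ → (Fin n → ℝ) → (Fin n → ℝ))
    (hb : ContDiff ℝ (⊤ : ℕ∞) (Function.uncurry b))
    (hbper : ∀ t i, TorusFun₁₁ (fun x => b t x i))
    (Θ v : ℝ → (Fin n → ℝ) → ℝ)
    (hΘ : ContDiff ℝ (⊤ : ℕ∞) (Function.uncurry Θ))
    (hΘper : ∀ t, TorusFun₁₁ (Θ t))
    (hΘpos : ∀ t x, 0 ≤ t → 0 < Θ t x)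
    (hΘPDE : ∀ t x, 0 ≤ t →
      deriv (fun s => Θ s x) t + ∑ i, pderiv₁₁ i (fun y => b t y i * Θ t y) x
        = ε * ∑ i, pderiv₁₁ i (pderiv₁₁ i (Θ t)) x)
    (hv : ContDiff ℝ (⊤ : ℕ∞) (Function.uncurry v))
    (hvper : ∀ t, TorusFun₁₁ (v t))
    (hvPDE : ∀ t x, 0 ≤ t →
      deriv (fun s => v s x) t + ∑ i, pderiv₁₁ i (fun y => b t y i * v t y) x
        = ε * ∑ i, pderiv₁₁ i (pderiv₁₁ i (v t)) x) :
    ∀ t x, 0 ≤ t → v t x ≠ 0 →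
      deriv (fun s => |v s x| ^ p / Θ s x ^ (p - 1)) t
          + ∑ i, pderiv₁₁ i (fun y => b t y i * (|v t y| ^ p / Θ t y ^ (p - 1))) x
          + ε * (4 * (p - 1) / p) * Θ t x *
              ∑ i, (pderiv₁₁ i (fun y => |v t y| ^ (p / 2) / Θ t y ^ (p / 2)) x) ^ 2
        = ε * ∑ i, pderiv₁₁ i (pderiv₁₁ i (fun y => |v t y| ^ p / Θ t y ^ (p - 1))) x :=
  stmt11_general n ε p b hb Θ v hΘ hΘpos hΘPDE hv hvPDE
end

section
/- Let ε > 0, δ > 0, C > 0, and let g : [0, εδ] → [0,∞) be a continuous function satisfying g(t) ≤ C ( ε^{−1} + ∫_0^t (ε(t−τ))^{−1/2} g(τ) dτ ) for all t ∈ [0, εδ]. If δ ≤ 1/(16 C²), then g(t) ≤ 2C ε^{−1} for all t ∈ [0, εδ]. -/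
/-! The maximum `M` of `g` on `[0, εδ]`, attained at some `t₀`, satisfies
`M ≤ C ε⁻¹ + C · 2√(t₀/ε) · M`, because the kernel `(ε(t₀ - τ))^{-1/2}` has integral `2√(t₀/ε)`.
Since `t₀/ε ≤ δ ≤ 1/(16C²)`, the factor `C · 2√(t₀/ε)` is at most `1/2`, and the term is absorbed:
`M ≤ 2Cε⁻¹`. -/

open MeasureTheory intervalIntegral Set

lemma inv_sqrt_mul_sub_eqOn {ε t : ℝ} (hε : 0 ≤ ε) :
    EqOn (fun τ => (Real.sqrt (ε * (t - τ)))⁻¹)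
      (fun τ => (Real.sqrt ε)⁻¹ * (t - τ) ^ (-(1 / 2) : ℝ)) (Iic t) := by
  intro τ hτ
  have hτ' : 0 ≤ t - τ := sub_nonneg.2 hτ
  simp only
  rw [Real.sqrt_mul hε, mul_inv, Real.rpow_neg hτ', ← Real.sqrt_eq_rpow]

lemma intervalIntegrable_inv_sqrt_mul_sub {ε t : ℝ} (hε : 0 ≤ ε) (ht : 0 ≤ t) :
    IntervalIntegrable (fun τ => (Real.sqrt (ε * (t - τ)))⁻¹) volume 0 t := by
  have hrpow : IntervalIntegrable (fun τ => (Real.sqrt ε)⁻¹ * (t - τ) ^ (-(1 / 2) : ℝ))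
      volume 0 t := by
    simpa using ((intervalIntegrable_rpow' (a := 0) (b := t) (by norm_num)).comp_sub_left
      t).symm.const_mul (Real.sqrt ε)⁻¹
  refine hrpow.congr (EqOn.symm ?_)
  exact (inv_sqrt_mul_sub_eqOn hε).mono fun τ hτ => (uIoc_of_le ht ▸ hτ).2

lemma integral_inv_sqrt_mul_sub {ε t : ℝ} (hε : 0 ≤ ε) (ht : 0 ≤ t) :
    ∫ τ in (0 : ℝ)..t, (Real.sqrt (ε * (t - τ)))⁻¹ = 2 * Real.sqrt (t / ε) := by
  rw [integral_congr ((inv_sqrt_mul_sub_eqOn hε).mono fun τ hτ => (uIcc_of_le ht ▸ hτ).2),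
    intervalIntegral.integral_const_mul,
    integral_comp_sub_left (fun x => x ^ (-(1 / 2) : ℝ)) t, sub_self, sub_zero,
    integral_rpow (Or.inl (by norm_num)), Real.zero_rpow (by norm_num),
    Real.sqrt_div' _ hε, Real.sqrt_eq_rpow t]
  norm_num
  ring

lemma integral_inv_sqrt_mul_sub_mul_le {ε t M : ℝ} {g : ℝ → ℝ} (hε : 0 ≤ ε) (ht : 0 ≤ t)
    (hg : ContinuousOn g (Icc 0 t)) (hgM : ∀ τ ∈ Icc 0 t, g τ ≤ M) :
    ∫ τ in (0 : ℝ)..t, (Real.sqrt (ε * (t - τ)))⁻¹ * g τ ≤ 2 * Real.sqrt (t / ε) * M := by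
  have hk := intervalIntegrable_inv_sqrt_mul_sub hε ht
  rw [← integral_inv_sqrt_mul_sub hε ht, ← intervalIntegral.integral_mul_const]
  refine integral_mono_on ht (hk.mul_continuousOn (uIcc_of_le ht ▸ hg)) (hk.mul_const M) ?_
  exact fun τ hτ => mul_le_mul_of_nonneg_left (hgM τ hτ) (by positivity)

lemma mul_two_sqrt_le_half {C s : ℝ} (hC : 0 < C) (hs : s ≤ 1 / (16 * C ^ 2)) :
    C * (2 * Real.sqrt s) ≤ 1 / 2 := by
  have hsqrt : Real.sqrt s ≤ 1 / (4 * C) := by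
    calc Real.sqrt s ≤ Real.sqrt (1 / (4 * C) ^ 2) := Real.sqrt_le_sqrt (hs.trans_eq (by ring))
      _ = 1 / (4 * C) := by rw [Real.sqrt_div' _ (by positivity), Real.sqrt_one,
          Real.sqrt_sq (by positivity)]
  calc C * (2 * Real.sqrt s) ≤ C * (2 * (1 / (4 * C))) := by gcongr
    _ = 1 / 2 := by field_simp; ring

lemma le_two_mul_of_le_add_mul {M a k : ℝ} (ha : 0 ≤ a) (hk : k ≤ 1 / 2)
    (hM : M ≤ a + k * M) : M ≤ 2 * a := by
  rcases le_or_gt 0 M with hM₀ | hM₀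
  · nlinarith
  · linarith

theorem stmt14_general
    (ε δ C : ℝ) (hε : 0 < ε) (hC : 0 < C)
    (g : ℝ → ℝ)
    (hgcont : ContinuousOn g (Set.Icc 0 (ε * δ)))
    (hgron : ∀ t ∈ Set.Icc 0 (ε * δ),
      g t ≤ C * (ε⁻¹ + ∫ τ in (0:ℝ)..t, (Real.sqrt (ε * (t - τ)))⁻¹ * g τ))
    (hδsmall : δ ≤ 1 / (16 * C ^ 2)) :
    ∀ t ∈ Set.Icc 0 (ε * δ), g t ≤ 2 * C * ε⁻¹ := by
  intro t ht
  obtain ⟨t₀, ht₀, hmax⟩ := isCompact_Icc.exists_isMaxOn ⟨t, ht⟩ hgcont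
  have hsub : Icc 0 t₀ ⊆ Icc 0 (ε * δ) := Icc_subset_Icc_right ht₀.2
  have hratio : t₀ / ε ≤ 1 / (16 * C ^ 2) :=
    ((div_le_iff₀ hε).2 (mul_comm δ ε ▸ ht₀.2)).trans hδsmall
  have hintegral := integral_inv_sqrt_mul_sub_mul_le hε.le ht₀.1 (hgcont.mono hsub)
    fun τ hτ => hmax (hsub hτ)
  have hself : g t₀ ≤ C * ε⁻¹ + C * (2 * Real.sqrt (t₀ / ε)) * g t₀ := by
    calc g t₀ ≤ C * (ε⁻¹ + 2 * Real.sqrt (t₀ / ε) * g t₀) := by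
          grw [hgron t₀ ht₀, hintegral]
      _ = _ := by ring
  calc g t ≤ g t₀ := hmax ht
    _ ≤ 2 * (C * ε⁻¹) := le_two_mul_of_le_add_mul (by positivity)
        (mul_two_sqrt_le_half hC hratio) hself
    _ = 2 * C * ε⁻¹ := by ring

/-- Singular Gronwall absorption: if a continuous nonnegative
`g` on `[0, εδ]` satisfies
`g(t) ≤ C (ε⁻¹ + ∫₀ᵗ (ε(t-τ))^{-1/2} g(τ) dτ)` and `δ ≤ 1/(16 C²)`,
then `g(t) ≤ 2C ε⁻¹` on `[0, εδ]`. -/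
theorem stmt14
    (ε δ C : ℝ) (hε : 0 < ε) (hδ : 0 < δ) (hC : 0 < C)
    (g : ℝ → ℝ)
    (hgcont : ContinuousOn g (Set.Icc 0 (ε * δ)))
    (hgnonneg : ∀ t ∈ Set.Icc 0 (ε * δ), 0 ≤ g t)
    (hgron : ∀ t ∈ Set.Icc 0 (ε * δ),
      g t ≤ C * (ε⁻¹ + ∫ τ in (0:ℝ)..t, (Real.sqrt (ε * (t - τ)))⁻¹ * g τ))
    (hδsmall : δ ≤ 1 / (16 * C ^ 2)) :
    ∀ t ∈ Set.Icc 0 (ε * δ), g t ≤ 2 * C * ε⁻¹ :=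
  stmt14_general ε δ C hε hC g hgcont hgron hδsmall
end

section
/- Let A : ℝ² → ℝ^{2×2} be smooth and suppose there are smooth functions λ_1, λ_2 : ℝ² → ℝ and smooth vector fields r_1, r_2, l_1, l_2 : ℝ² → ℝ² with A(u) r_i(u) = λ_i(u) r_i(u), l_i(u)·r_j(u) = δ_{ij}, and smooth Riemann invariants R_1, R_2 : ℝ² → ℝ with ∇_u R_i(u) = l_i(u). Assume the Temple condition ⟨l_i(u), (∇_u r_j(u)) r_j(u)⟩ = 0 for all i ≠ j and all u. Let ε > 0 and let u : [0,∞)×ℝ → ℝ² be a smooth solution of u_t + A(u) u_x = ε u_{xx}. Then there exist smooth functions D_{ij} : ℝ² → ℝ (depending only on λ, r, l and their derivatives) such that the functions R_i(t,x) = R_i(u(t,x)) satisfy ∂_t R_i + λ_i(u) ∂_x R_i = ε ∂_x² R_i + ε (∂_x R_i) Σ_{j=1}^2 D_{ij}(u) ∂_x R_j for i = 1, 2; equivalently, ∂_t R_i + λ̃_i ∂_x R_i = ε ∂_x² R_i with λ̃_i = λ_i(u) − ε Σ_{j=1}^2 D_{ij}(u) ∂_x R_j. -/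
open Matrix

/-!
Dotting the viscous equation with `lᵢ(u)` and using `∂ₓRⱼ = lⱼ(u) ⬝ᵥ uₓ` gives
`∂ₜRᵢ + λᵢ ∂ₓRᵢ = ε ∂ₓ²Rᵢ - ε (Dlᵢ(u) uₓ) ⬝ᵥ uₓ`. Expanding `uₓ = Σⱼ (∂ₓRⱼ) rⱼ` turns the last
term into the quadratic form `Σⱼₖ (∂ₓRⱼ)(∂ₓRₖ) Γᵢⱼₖ` with `Γᵢⱼₖ = (Dlᵢ rⱼ) ⬝ᵥ rₖ`.
Differentiating `lᵢ ⬝ᵥ rₖ = δᵢₖ` gives `Γᵢⱼₖ = -lᵢ ⬝ᵥ (Drₖ rⱼ)`, so the Temple condition kills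
`Γᵢₖₖ` for `k ≠ i`, and in two dimensions every surviving term carries a factor `∂ₓRᵢ`.
-/

section DotProduct

variable {𝕜 E ι : Type*} [NontriviallyNormedField 𝕜] [NormedAddCommGroup E] [NormedSpace 𝕜 E]
  [Fintype ι]

theorem fderiv_dotProduct_apply {f g : E → ι → 𝕜} {x : E} (hf : DifferentiableAt 𝕜 f x)
    (hg : DifferentiableAt 𝕜 g x) (ξ : E) :
    fderiv 𝕜 (fun y => f y ⬝ᵥ g y) x ξ = fderiv 𝕜 f x ξ ⬝ᵥ g x + f x ⬝ᵥ fderiv 𝕜 g x ξ := by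
  have hfk := differentiableAt_pi.1 hf
  have hgk := differentiableAt_pi.1 hg
  simp only [dotProduct]
  rw [fderiv_fun_sum fun k _ => (hfk k).fun_mul (hgk k)]
  simp only [_root_.sum_apply, fderiv_fun_mul (hfk _) (hgk _), fderiv_apply hf,
    fderiv_apply hg, ← Finset.sum_add_distrib]
  exact Finset.sum_congr rfl fun _ _ => by
    simp only [_root_.add_apply, _root_.smul_apply, ContinuousLinearMap.comp_apply,
      ContinuousLinearMap.proj_apply, smul_eq_mul]
    ring

theorem fderiv_dotProduct_apply_eq_neg {f g : E → ι → 𝕜} {c : 𝕜} (hfg : ∀ y, f y ⬝ᵥ g y = c)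
    {x : E} (hf : DifferentiableAt 𝕜 f x) (hg : DifferentiableAt 𝕜 g x) (ξ : E) :
    fderiv 𝕜 f x ξ ⬝ᵥ g x = -(f x ⬝ᵥ fderiv 𝕜 g x ξ) := by
  have h := fderiv_dotProduct_apply hf hg ξ
  simp only [show (fun y => f y ⬝ᵥ g y) = fun _ => c from funext hfg, fderiv_fun_const,
    Pi.zero_apply, _root_.zero_apply] at h
  linear_combination -h

end DotProduct

theorem eq_sum_dotProduct_smul_of_biorthogonal {ι R : Type*} [Fintype ι] [DecidableEq ι]
    [CommRing R] {l r : ι → ι → R} (h : ∀ i j, l i ⬝ᵥ r j = if i = j then 1 else 0)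
    (v : ι → R) : v = ∑ j, (l j ⬝ᵥ v) • r j := by
  have hlr : Matrix.of l * (Matrix.of r)ᵀ = 1 := by
    ext i j
    simpa [Matrix.mul_apply, dotProduct, Matrix.one_apply] using h i j
  have hrl : (Matrix.of r)ᵀ * Matrix.of l = 1 := mul_eq_one_comm.mp hlr
  calc v = (Matrix.of r)ᵀ *ᵥ (Matrix.of l *ᵥ v) := by rw [mulVec_mulVec, hrl, one_mulVec]
    _ = _ := by
      ext k
      simp [mulVec, dotProduct, Finset.sum_apply, mul_comm]

theorem dotProduct_mulVec_of_biorthogonal {ι R : Type*} [Fintype ι] [DecidableEq ι]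
    [CommRing R] {M : Matrix ι ι R} {lam : ι → R} {l r : ι → ι → R}
    (heig : ∀ j, M *ᵥ r j = lam j • r j) (h : ∀ i j, l i ⬝ᵥ r j = if i = j then 1 else 0)
    (i : ι) (v : ι → R) :
    l i ⬝ᵥ (M *ᵥ v) = lam i * (l i ⬝ᵥ v) := by
  conv_lhs => rw [eq_sum_dotProduct_smul_of_biorthogonal h v]
  simp [mulVec_sum, mulVec_smul, heig, dotProduct_sum, h, mul_comm]

section Frame

variable {ι : Type*} [Fintype ι] (l r : ι → (ι → ℝ) → (ι → ℝ))

noncomputable def frameCoeff (i j k : ι) (w : ι → ℝ) : ℝ :=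
  fderiv ℝ (l i) w (r j w) ⬝ᵥ r k w

/-- The coefficients `Dᵢⱼ`, read off from `Σⱼₖ cⱼ cₖ Γᵢⱼₖ = cᵢ Σⱼ (-Dᵢⱼ) cⱼ` in dimension two,
where `Γᵢₖₖ = 0` for `k ≠ i`. -/
noncomputable def riemannCoeff [DecidableEq ι] (i j : ι) (w : ι → ℝ) : ℝ :=
  -(if j = i then frameCoeff l r i i i w else frameCoeff l r i i j w + frameCoeff l r i j i w)

variable {l r}

theorem contDiff_frameCoeff (hl : ∀ i, ContDiff ℝ (⊤ : ℕ∞) (l i))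
    (hr : ∀ i, ContDiff ℝ (⊤ : ℕ∞) (r i)) (i j k : ι) :
    ContDiff ℝ (⊤ : ℕ∞) (frameCoeff l r i j k) := by
  have hlr : ContDiff ℝ (⊤ : ℕ∞) fun w => fderiv ℝ (l i) w (r j w) :=
    ((hl i).fderiv_right le_rfl).clm_apply (hr j)
  exact ContDiff.sum fun m _ => (contDiff_pi.1 hlr m).mul (contDiff_pi.1 (hr k) m)

theorem contDiff_riemannCoeff [DecidableEq ι] (hl : ∀ i, ContDiff ℝ (⊤ : ℕ∞) (l i))
    (hr : ∀ i, ContDiff ℝ (⊤ : ℕ∞) (r i)) (i j : ι) :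
    ContDiff ℝ (⊤ : ℕ∞) (riemannCoeff l r i j) := by
  unfold riemannCoeff
  split_ifs
  · exact (contDiff_frameCoeff hl hr i i i).neg
  · exact ((contDiff_frameCoeff hl hr i i j).add (contDiff_frameCoeff hl hr i j i)).neg

theorem frameCoeff_eq_neg [DecidableEq ι]
    (hnorm : ∀ w i j, l i w ⬝ᵥ r j w = if i = j then 1 else 0) {w : ι → ℝ}
    (hl : ∀ i, DifferentiableAt ℝ (l i) w) (hr : ∀ i, DifferentiableAt ℝ (r i) w) (i j k : ι) :
    frameCoeff l r i j k w = -(l i w ⬝ᵥ fderiv ℝ (r k) w (r j w)) :=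
  fderiv_dotProduct_apply_eq_neg (fun w => hnorm w i k) (hl i) (hr k) _

theorem frameCoeff_self_eq_zero [DecidableEq ι]
    (hnorm : ∀ w i j, l i w ⬝ᵥ r j w = if i = j then 1 else 0) {w : ι → ℝ}
    (hl : ∀ i, DifferentiableAt ℝ (l i) w) (hr : ∀ i, DifferentiableAt ℝ (r i) w)
    (hTemple : ∀ i j, i ≠ j → l i w ⬝ᵥ fderiv ℝ (r j) w (r j w) = 0) {i k : ι} (hki : k ≠ i) :
    frameCoeff l r i k k w = 0 := by
  rw [frameCoeff_eq_neg hnorm hl hr, hTemple i k hki.symm, neg_zero]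

theorem fderiv_dotProduct_self_eq_sum_frameCoeff [DecidableEq ι] {w : ι → ℝ}
    (hnorm : ∀ i j, l i w ⬝ᵥ r j w = if i = j then 1 else 0) (i : ι) (v : ι → ℝ) :
    fderiv ℝ (l i) w v ⬝ᵥ v = ∑ j, ∑ k, (l j w ⬝ᵥ v) * (l k w ⬝ᵥ v) * frameCoeff l r i j k w := by
  conv_lhs => rw [eq_sum_dotProduct_smul_of_biorthogonal hnorm v]
  simp only [map_sum, map_smul, sum_dotProduct, dotProduct_sum, smul_dotProduct, dotProduct_smul,
    smul_eq_mul, frameCoeff, Finset.mul_sum]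
  rw [Finset.sum_comm]
  exact Finset.sum_congr rfl fun _ _ => Finset.sum_congr rfl fun _ _ => by ring

end Frame

theorem Fin.sum_sum_mul_mul_eq_of_diag_eq_zero {R : Type*} [CommRing R] (c : Fin 2 → R)
    (B : Fin 2 → Fin 2 → R) {i : Fin 2} (h : ∀ k, k ≠ i → B k k = 0) :
    ∑ j, ∑ k, c j * c k * B j k = c i * ∑ j, (if j = i then B i i else B i j + B j i) * c j := by
  fin_cases i
  · simp only [Fin.sum_univ_two, Fin.isValue, h 1 (by decide), mul_zero, add_zero, Fin.zero_eta,
      ite_mul, ↓reduceIte, one_ne_zero]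
    ring
  · simp only [Fin.sum_univ_two, Fin.isValue, h 0 (by decide), mul_zero, zero_add, Fin.mk_one,
      ite_mul, zero_ne_one, ↓reduceIte]
    ring

theorem fderiv_dotProduct_self_eq {l r : Fin 2 → (Fin 2 → ℝ) → (Fin 2 → ℝ)}
    (hnorm : ∀ w i j, l i w ⬝ᵥ r j w = if i = j then 1 else 0) {w : Fin 2 → ℝ}
    (hl : ∀ i, DifferentiableAt ℝ (l i) w) (hr : ∀ i, DifferentiableAt ℝ (r i) w)
    (hTemple : ∀ i j, i ≠ j → l i w ⬝ᵥ fderiv ℝ (r j) w (r j w) = 0) (i : Fin 2) (v : Fin 2 → ℝ) :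
    fderiv ℝ (l i) w v ⬝ᵥ v = -((l i w ⬝ᵥ v) * ∑ j, riemannCoeff l r i j w * (l j w ⬝ᵥ v)) := by
  rw [fderiv_dotProduct_self_eq_sum_frameCoeff (hnorm w), Fin.sum_sum_mul_mul_eq_of_diag_eq_zero
    _ _ fun k hk => frameCoeff_self_eq_zero hnorm hl hr hTemple hk]
  simp only [riemannCoeff, neg_mul, Finset.sum_neg_distrib, neg_neg, mul_neg]

theorem riemannInvariant_transport_pointwise {l r : Fin 2 → (Fin 2 → ℝ) → (Fin 2 → ℝ)}
    (hnorm : ∀ w i j, l i w ⬝ᵥ r j w = if i = j then 1 else 0) {w : Fin 2 → ℝ}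
    (hl : ∀ i, DifferentiableAt ℝ (l i) w) (hr : ∀ i, DifferentiableAt ℝ (r i) w)
    (hTemple : ∀ i j, i ≠ j → l i w ⬝ᵥ fderiv ℝ (r j) w (r j w) = 0)
    {M : Matrix (Fin 2) (Fin 2) ℝ} {μ : Fin 2 → ℝ} (heig : ∀ i, M *ᵥ r i w = μ i • r i w)
    {ε : ℝ} {ut ux uxx : Fin 2 → ℝ} (hPDE : ut + M *ᵥ ux = ε • uxx) (i : Fin 2) :
    l i w ⬝ᵥ ut + μ i * (l i w ⬝ᵥ ux)
      = ε * (fderiv ℝ (l i) w ux ⬝ᵥ ux + l i w ⬝ᵥ uxx)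
        + ε * (l i w ⬝ᵥ ux) * ∑ j, riemannCoeff l r i j w * (l j w ⬝ᵥ ux) := by
  have h := congrArg (l i w ⬝ᵥ ·) hPDE
  simp only [dotProduct_add, dotProduct_smul, smul_eq_mul,
    dotProduct_mulVec_of_biorthogonal heig (hnorm w)] at h
  rw [fderiv_dotProduct_self_eq hnorm hl hr hTemple]
  linear_combination h

section Chain

variable {ι : Type*} [Fintype ι] {Φ : (ι → ℝ) → ℝ} {L : (ι → ℝ) → ι → ℝ} {γ : ℝ → ι → ℝ}
  {x : ℝ}

theorem deriv_comp_eq_dotProduct (hgrad : ∀ ξ, fderiv ℝ Φ (γ x) ξ = L (γ x) ⬝ᵥ ξ)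
    (hΦ : DifferentiableAt ℝ Φ (γ x)) (hγ : DifferentiableAt ℝ γ x) :
    deriv (fun y => Φ (γ y)) x = L (γ x) ⬝ᵥ deriv γ x :=
  (fderiv_comp_deriv x hΦ hγ).trans (hgrad _)

theorem deriv_deriv_comp_eq_dotProduct (hgrad : ∀ w ξ, fderiv ℝ Φ w ξ = L w ⬝ᵥ ξ)
    (hΦ : Differentiable ℝ Φ) (hL : DifferentiableAt ℝ L (γ x)) (hγ : Differentiable ℝ γ)
    (hγ' : DifferentiableAt ℝ (deriv γ) x) :
    deriv (deriv fun y => Φ (γ y)) x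
      = fderiv ℝ L (γ x) (deriv γ x) ⬝ᵥ deriv γ x + L (γ x) ⬝ᵥ deriv (deriv γ) x := by
  have h : deriv (fun y => Φ (γ y)) = fun y => L (γ y) ⬝ᵥ deriv γ y :=
    funext fun y => deriv_comp_eq_dotProduct (hgrad _) (hΦ _) (hγ y)
  rw [h, ← fderiv_apply_one_eq_deriv,
    fderiv_dotProduct_apply (f := fun y => L (γ y)) (hL.comp x (hγ x)) hγ',
    fderiv_fun_comp x hL (hγ x)]
  simp only [ContinuousLinearMap.comp_apply, fderiv_apply_one_eq_deriv]

end Chain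

theorem stmt15_general
    (A : (Fin 2 → ℝ) → Matrix (Fin 2) (Fin 2) ℝ)
    (lam : Fin 2 → (Fin 2 → ℝ) → ℝ)
    (r l : Fin 2 → (Fin 2 → ℝ) → (Fin 2 → ℝ))
    (hr : ∀ i, ContDiff ℝ (⊤ : ℕ∞) (r i))
    (hl : ∀ i, ContDiff ℝ (⊤ : ℕ∞) (l i))
    (heig : ∀ w i, A w *ᵥ r i w = lam i w • r i w)
    (hnorm : ∀ w i j, l i w ⬝ᵥ r j w = if i = j then 1 else 0)
    (R : Fin 2 → (Fin 2 → ℝ) → ℝ)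
    (hR : ∀ i, ContDiff ℝ (⊤ : ℕ∞) (R i))
    (hgrad : ∀ i w ξ, fderiv ℝ (R i) w ξ = l i w ⬝ᵥ ξ)
    (hTemple : ∀ w i j, i ≠ j → l i w ⬝ᵥ fderiv ℝ (r j) w (r j w) = 0)
    (ε : ℝ)
    (u : ℝ → ℝ → (Fin 2 → ℝ))
    (hu : ContDiff ℝ (⊤ : ℕ∞) (Function.uncurry u))
    (hPDE : ∀ t x, 0 ≤ t →
      deriv (fun s => u s x) t + A (u t x) *ᵥ deriv (fun y => u t y) x
        = ε • deriv (deriv (u t)) x) :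
    ∃ D : Fin 2 → Fin 2 → (Fin 2 → ℝ) → ℝ,
      (∀ i j, ContDiff ℝ (⊤ : ℕ∞) (D i j)) ∧
      ∀ i t x, 0 ≤ t →
        deriv (fun s => R i (u s x)) t + lam i (u t x) * deriv (fun y => R i (u t y)) x
          = ε * deriv (deriv (fun y => R i (u t y))) x
            + ε * deriv (fun y => R i (u t y)) x *
                ∑ j, D i j (u t x) * deriv (fun y => R j (u t y)) x := by
  refine ⟨riemannCoeff l r, contDiff_riemannCoeff hl hr, fun i t x ht => ?_⟩
  have hl' : ∀ i, Differentiable ℝ (l i) := fun i => (hl i).differentiable (by simp)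
  have hr' : ∀ i, Differentiable ℝ (r i) := fun i => (hr i).differentiable (by simp)
  have hR' : ∀ i, Differentiable ℝ (R i) := fun i => (hR i).differentiable (by simp)
  have hux : ContDiff ℝ (⊤ : ℕ∞) (u t) := hu.comp (contDiff_const.prodMk contDiff_id)
  have hut : ContDiff ℝ (⊤ : ℕ∞) (fun s => u s x) := hu.comp (contDiff_id.prodMk contDiff_const)
  have huxx : ContDiff ℝ (⊤ : ℕ∞) (deriv (u t)) := (contDiff_infty_iff_deriv.mp hux).2
  have hRx : ∀ j, deriv (fun y => R j (u t y)) x = l j (u t x) ⬝ᵥ deriv (u t) x := fun j =>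
    deriv_comp_eq_dotProduct (hgrad j _) (hR' j _) (hux.differentiable (by simp) x)
  rw [deriv_comp_eq_dotProduct (hgrad i _) (hR' i _) (hut.differentiable (by simp) t),
    deriv_deriv_comp_eq_dotProduct (hgrad i) (hR' i) (hl' i _) (hux.differentiable (by simp))
      (huxx.differentiable (by simp) x)]
  simp only [hRx]
  exact riemannInvariant_transport_pointwise hnorm (fun j => hl' j _) (fun j => hr' j _)
    (hTemple _) (heig _) (hPDE t x ht) i

/-- For a smooth `2×2` hyperbolic system with eigenvalues `λᵢ`,
eigenvectors `rᵢ, lᵢ` (normalized `lᵢ·rⱼ = δᵢⱼ`), Riemann invariants `Rᵢ` with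
`∇Rᵢ = lᵢ`, satisfying the Temple condition `⟨lᵢ, (∇rⱼ)rⱼ⟩ = 0` for `i ≠ j`:
for any smooth solution of `u_t + A(u)u_x = ε u_xx` there are smooth functions
`Dᵢⱼ` such that `Rᵢ(u)` satisfies
`∂_t Rᵢ + λᵢ(u) ∂_x Rᵢ = ε ∂_x² Rᵢ + ε (∂_x Rᵢ) Σⱼ Dᵢⱼ(u) ∂_x Rⱼ`. -/
theorem stmt15
    (A : (Fin 2 → ℝ) → Matrix (Fin 2) (Fin 2) ℝ)
    (hA : ∀ i j, ContDiff ℝ (⊤ : ℕ∞) (fun w => A w i j))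
    (lam : Fin 2 → (Fin 2 → ℝ) → ℝ)
    (r l : Fin 2 → (Fin 2 → ℝ) → (Fin 2 → ℝ))
    (hlam : ∀ i, ContDiff ℝ (⊤ : ℕ∞) (lam i))
    (hr : ∀ i, ContDiff ℝ (⊤ : ℕ∞) (r i))
    (hl : ∀ i, ContDiff ℝ (⊤ : ℕ∞) (l i))
    (heig : ∀ w i, A w *ᵥ r i w = lam i w • r i w)
    (hnorm : ∀ w i j, l i w ⬝ᵥ r j w = if i = j then 1 else 0)
    (R : Fin 2 → (Fin 2 → ℝ) → ℝ)
    (hR : ∀ i, ContDiff ℝ (⊤ : ℕ∞) (R i))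
    (hgrad : ∀ i w ξ, fderiv ℝ (R i) w ξ = l i w ⬝ᵥ ξ)
    (hTemple : ∀ w i j, i ≠ j → l i w ⬝ᵥ fderiv ℝ (r j) w (r j w) = 0)
    (ε : ℝ) (hε : 0 < ε)
    (u : ℝ → ℝ → (Fin 2 → ℝ))
    (hu : ContDiff ℝ (⊤ : ℕ∞) (Function.uncurry u))
    (hPDE : ∀ t x, 0 ≤ t →
      deriv (fun s => u s x) t + A (u t x) *ᵥ deriv (fun y => u t y) x
        = ε • deriv (deriv (u t)) x) :
    ∃ D : Fin 2 → Fin 2 → (Fin 2 → ℝ) → ℝ,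
      (∀ i j, ContDiff ℝ (⊤ : ℕ∞) (D i j)) ∧
      ∀ i t x, 0 ≤ t →
        deriv (fun s => R i (u s x)) t + lam i (u t x) * deriv (fun y => R i (u t y)) x
          = ε * deriv (deriv (fun y => R i (u t y))) x
            + ε * deriv (fun y => R i (u t y)) x *
                ∑ j, D i j (u t x) * deriv (fun y => R j (u t y)) x :=
  stmt15_general A lam r l hr hl heig hnorm R hR hgrad hTemple ε u hu hPDE
end
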